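/- arXiv:2202.05419 — 2 statements merged into one kernel-verified Lean document; each statement's English description precedes it below -/
import Mathlib

section
/- Let U ~ χ²_p(λ) be a noncentral chi-squared random variable with p degrees of freedom and noncentrality λ ≥ 0. Then for every c > 0, P(U − (p+λ) > c) ≤ exp(−(p/2)·{c/(p+λ) − log(1 + c/(p+λ))}). -/
open MeasureTheory ProbabilityTheory Real Filter

noncomputable section
open scoped ENNReal NNReal

lemma gauss_pdf_mul_eq (t b : ℝ) (ht : t < 1/2) (x : ℝ) :
    gaussianPDFReal 0 1 x * Real.exp (t * (x + b)^2)
      = ((Real.sqrt (2 * π))⁻¹ * Real.exp (t * b^2 / (1 - 2*t))) *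
        Real.exp (-((1/2 - t) * (x - t*b/(1/2-t))^2)) := by
  have ha : (1/2 - t) ≠ 0 := by linarith
  have h2 : (1:ℝ) - 2*t ≠ 0 := by linarith
  rw [gaussianPDFReal]
  push_cast
  rw [mul_one, mul_assoc, mul_assoc, ← Real.exp_add, ← Real.exp_add]
  congr 1
  congr 1
  field_simp
  ring

lemma gauss_withDensity :
    gaussianReal 0 1 = volume.withDensity
      (fun x => ((gaussianPDFReal 0 1 x).toNNReal : ℝ≥0∞)) := by
  rw [gaussianReal_of_var_ne_zero 0 one_ne_zero, gaussianPDF_def]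
  rfl

lemma gauss_sq_integrable (t b : ℝ) (ht : t < 1/2) :
    Integrable (fun x => Real.exp (t * (x + b)^2)) (gaussianReal 0 1) := by
  have ha : (0:ℝ) < 1/2 - t := by linarith
  rw [gauss_withDensity,
    integrable_withDensity_iff_integrable_smul (measurable_gaussianPDFReal 0 1).real_toNNReal]
  have : (fun x => (gaussianPDFReal 0 1 x).toNNReal • Real.exp (t * (x + b)^2))
      = fun x => ((Real.sqrt (2 * π))⁻¹ * Real.exp (t * b^2 / (1 - 2*t))) *
        Real.exp (-((1/2 - t) * (x - t*b/(1/2-t))^2)) := by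
    ext x
    rw [NNReal.smul_def, smul_eq_mul,
      Real.coe_toNNReal _ (gaussianPDFReal_nonneg 0 1 x), gauss_pdf_mul_eq t b ht x]
  rw [this]
  simp_rw [← neg_mul]
  exact ((integrable_exp_neg_mul_sq ha).comp_sub_right (t*b/(1/2-t))).const_mul _

lemma gauss_sq_integral (t b : ℝ) (ht : t < 1/2) :
    ∫ x, Real.exp (t * (x + b)^2) ∂(gaussianReal 0 1)
      = Real.exp (t * b^2 / (1 - 2*t)) / Real.sqrt (1 - 2*t) := by
  have ha : (0:ℝ) < 1/2 - t := by linarith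
  rw [gauss_withDensity,
    integral_withDensity_eq_integral_smul (measurable_gaussianPDFReal 0 1).real_toNNReal]
  have : (fun x => (gaussianPDFReal 0 1 x).toNNReal • Real.exp (t * (x + b)^2))
      = fun x => ((Real.sqrt (2 * π))⁻¹ * Real.exp (t * b^2 / (1 - 2*t))) *
        Real.exp (-((1/2 - t) * (x - t*b/(1/2-t))^2)) := by
    ext x
    rw [NNReal.smul_def, smul_eq_mul,
      Real.coe_toNNReal _ (gaussianPDFReal_nonneg 0 1 x), gauss_pdf_mul_eq t b ht x]
  rw [this]
  rw [integral_const_mul]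
  simp_rw [← neg_mul]
  rw [integral_sub_right_eq_self (fun x => Real.exp (-(1/2-t) * x^2)) (t*b/(1/2-t)),
    integral_gaussian]
  rw [div_eq_mul_inv, mul_comm ((Real.sqrt (2*π))⁻¹), mul_assoc]
  congr 1
  rw [← Real.sqrt_inv, ← Real.sqrt_mul (by positivity), ← Real.sqrt_inv]
  congr 1
  have h2 : (0:ℝ) < 1 - 2*t := by linarith
  have hpos : (0:ℝ) < π * 2 - π * t * 4 := by nlinarith [Real.pi_pos]
  field_simp


lemma pi_integrable_prod {p : ℕ} (f : Fin p → ℝ → ℝ)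
    (hf : ∀ i, Integrable (f i) (gaussianReal 0 1)) :
    Integrable (fun z : Fin p → ℝ => ∏ i, f i (z i))
      (Measure.pi fun _ => gaussianReal 0 1) := by
  letI : MeasureSpace ℝ := ⟨gaussianReal 0 1⟩
  haveI : SigmaFinite (volume : Measure ℝ) := by
    show SigmaFinite (gaussianReal 0 1); infer_instance
  exact Integrable.fintype_prod hf

lemma pi_integral_prod {p : ℕ} (f : Fin p → ℝ → ℝ) :
    ∫ z : Fin p → ℝ, ∏ i, f i (z i) ∂(Measure.pi fun _ => gaussianReal 0 1)
      = ∏ i, ∫ x, f i x ∂(gaussianReal 0 1) := by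
  letI : MeasureSpace ℝ := ⟨gaussianReal 0 1⟩
  haveI : SigmaFinite (volume : Measure ℝ) := by
    show SigmaFinite (gaussianReal 0 1); infer_instance
  exact integral_fintype_prod_eq_prod f


/-- The noncentral chi-squared distribution `χ²_p(λ)` with `p` degrees of freedom and
noncentrality `λ = ‖μ‖²`: the law of `∑ i, (Z i + μ i)^2` for `Z₁, …, Z_p` i.i.d.
standard normal and `μ ∈ ℝ^p`. -/
def noncentralChiSq (p : ℕ) (μ : Fin p → ℝ) : Measure ℝ :=
  Measure.map (fun z : Fin p → ℝ => ∑ i, (z i + μ i) ^ 2)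
    (Measure.pi fun _ => gaussianReal 0 1)

/-- Upper tail bound for the noncentral chi-squared distribution: for `U ~ χ²_p(λ)` and
every `c > 0`, `P(U − (p+λ) > c) ≤ exp(−(p/2)(c/(p+λ) − log(1 + c/(p+λ))))`. -/
theorem noncentralChiSq_upper_tail (p : ℕ) (hp : 1 ≤ p) (μ : Fin p → ℝ)
    (lam : ℝ) (hlam : lam = ∑ i, μ i ^ 2) (c : ℝ) (hc : 0 < c) :
    noncentralChiSq p μ {u | u - ((p : ℝ) + lam) > c} ≤
      ENNReal.ofReal
        (Real.exp (-((p : ℝ) / 2) *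
          (c / ((p : ℝ) + lam) - Real.log (1 + c / ((p : ℝ) + lam))))) := by
  classical
  have hlam0 : 0 ≤ lam := hlam ▸ Finset.sum_nonneg (fun i _ => sq_nonneg _)
  have hp1 : (1:ℝ) ≤ (p:ℝ) := by exact_mod_cast hp
  set m : ℝ := (p:ℝ) + lam with hm_def
  have hm : 0 < m := by simp only [hm_def]; linarith
  have hmc : 0 < m + c := by linarith
  set t : ℝ := c / (2*(m+c)) with ht_def
  have ht0 : 0 < t := by positivity
  have ht : t < 1/2 := by
    rw [ht_def, div_lt_iff₀ (by linarith)]; linarith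
  have h12t : 1 - 2*t = m/(m+c) := by
    rw [ht_def]; field_simp; ring
  have h12t0 : 0 < 1 - 2*t := by linarith
  set U : (Fin p → ℝ) → ℝ := fun z => ∑ i, (z i + μ i) ^ 2 with hU_def
  have U_meas : Measurable U := by
    apply Finset.measurable_sum
    intro i _
    exact ((measurable_pi_apply i).add_const _).pow_const 2
  set P : Measure (Fin p → ℝ) := Measure.pi fun _ => gaussianReal 0 1 with hP_def
  have hmap : noncentralChiSq p μ = Measure.map U P := rfl
  haveI : IsProbabilityMeasure (noncentralChiSq p μ) := by
    rw [noncentralChiSq]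
    exact Measure.isProbabilityMeasure_map U_meas.aemeasurable
  -- integrability of exp(t U) over the product space
  have hprod : ∀ z : Fin p → ℝ, Real.exp (t * U z) = ∏ i, Real.exp (t * (z i + μ i)^2) := by
    intro z
    rw [hU_def, Finset.mul_sum, Real.exp_sum]
  have hint_pi : Integrable (fun z => Real.exp (t * U z)) P := by
    simp_rw [hprod]
    exact pi_integrable_prod _ (fun i => gauss_sq_integrable t (μ i) ht)
  have hg_meas : Measurable (fun u : ℝ => Real.exp (t * u)) :=
    (measurable_id.const_mul t).exp
  have hint : Integrable (fun u => Real.exp (t * u)) (noncentralChiSq p μ) := by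
    rw [hmap,
      integrable_map_measure hg_meas.aestronglyMeasurable U_meas.aemeasurable]
    exact hint_pi
  -- Chernoff
  have hcher := measure_ge_le_exp_mul_mgf (X := id) (μ := noncentralChiSq p μ)
    (m + c) ht0.le hint
  -- compute the mgf
  have hmgf : mgf id (noncentralChiSq p μ) t
      = Real.exp (t * lam / (1 - 2*t)) * ((Real.sqrt (1 - 2*t))⁻¹)^p := by
    rw [mgf, hmap]
    simp only [id_eq]
    rw [integral_map U_meas.aemeasurable hg_meas.aestronglyMeasurable]
    calc ∫ z, Real.exp (t * U z) ∂P
        = ∫ z : Fin p → ℝ, ∏ i, Real.exp (t * (z i + μ i)^2) ∂P := by simp_rw [hprod]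
      _ = ∏ i, ∫ x, Real.exp (t * (x + μ i)^2) ∂(gaussianReal 0 1) := by
          rw [hP_def]; exact pi_integral_prod (fun i x => Real.exp (t * (x + μ i)^2))
      _ = ∏ i, Real.exp (t * (μ i)^2 / (1 - 2*t)) / Real.sqrt (1 - 2*t) :=
          Finset.prod_congr rfl (fun i _ => gauss_sq_integral t (μ i) ht)
      _ = (∏ i, Real.exp (t * (μ i)^2 / (1 - 2*t))) / (Real.sqrt (1 - 2*t))^p := by
          rw [Finset.prod_div_distrib, Finset.prod_const, Finset.card_univ, Fintype.card_fin]
      _ = Real.exp (t * lam / (1 - 2*t)) * ((Real.sqrt (1 - 2*t))⁻¹)^p := by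
          rw [← Real.exp_sum, hlam, Finset.mul_sum, Finset.sum_div, div_eq_mul_inv, inv_pow]
  -- the exponent identity
  have hval : Real.exp (-t * (m + c)) * mgf id (noncentralChiSq p μ) t
      = Real.exp (-((p : ℝ) / 2) * (c / m - Real.log (1 + c / m))) := by
    rw [hmgf]
    have hs : ((Real.sqrt (1 - 2*t))⁻¹)^p
        = Real.exp ((p : ℝ) * (-(1/2) * Real.log (1 - 2*t))) := by
      rw [Real.exp_nat_mul]
      congr 1
      rw [eq_comm, neg_mul, show -(1/2 * Real.log (1-2*t)) = -(Real.log (Real.sqrt (1-2*t))) by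
          rw [Real.log_sqrt h12t0.le]; ring,
        ← Real.log_inv, Real.exp_log (by positivity)]
    rw [hs, ← Real.exp_add, ← Real.exp_add]
    congr 1
    have hlog : Real.log (1 - 2*t) = - Real.log (1 + c/m) := by
      rw [h12t, ← Real.log_inv]
      congr 1
      field_simp
    rw [hlog]
    have h1 : t * (m + c) = c / 2 := by
      rw [ht_def]; field_simp
    have h2 : t * lam / (1 - 2*t) = lam * c / (2*m) := by
      rw [h12t, ht_def]; field_simp
    have h1' : -t * (m + c) = -(c/2) := by rw [neg_mul, h1]
    rw [h1', h2]
    have hpm : (p:ℝ) = m - lam := by rw [hm_def]; ring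
    rw [hpm]
    field_simp
    ring
  -- conclude
  calc noncentralChiSq p μ {u | u - m > c}
      ≤ noncentralChiSq p μ {u | m + c ≤ id u} := by
        apply measure_mono
        intro u hu
        simp only [Set.mem_setOf_eq, id_eq] at *
        linarith
    _ ≤ ENNReal.ofReal (Real.exp (-((p : ℝ) / 2) * (c / m - Real.log (1 + c / m)))) := by
        rw [← ENNReal.ofReal_toReal (measure_ne_top (noncentralChiSq p μ) _)]
        exact ENNReal.ofReal_le_ofReal (hcher.trans (le_of_eq hval))
end
end

section
/- Let U ~ χ²_p(λ) be a noncentral chi-squared random variable with p degrees of freedom and noncentrality λ ≥ 0. Then for every c > 0, P(U − p ≤ −c) ≤ exp(−c²/(4p)). -/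
open MeasureTheory ProbabilityTheory Real Filter

open scoped ENNReal NNReal

lemma aux_exp_le (u : ℝ) (hu : 0 ≤ u) : Real.exp (u - u^2/2) ≤ 1 + u := by
  have hmono : MonotoneOn (fun x : ℝ => (1+x) * Real.exp (x^2/2 - x)) (Set.Ici 0) := by
    have hderiv : ∀ x : ℝ, HasDerivAt (fun x : ℝ => (1+x) * Real.exp (x^2/2 - x))
        (Real.exp (x^2/2 - x) * x^2) x := by
      intro x
      have h1 : HasDerivAt (fun x : ℝ => 1 + x) 1 x := (hasDerivAt_id x).const_add 1
      have h2 : HasDerivAt (fun x : ℝ => x^2/2 - x) (x - 1) x := by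
        have := ((hasDerivAt_pow 2 x).div_const 2).sub (hasDerivAt_id x)
        refine this.congr_deriv ?_
        norm_num
      have := h1.mul h2.exp
      refine this.congr_deriv ?_
      ring
    refine monotoneOn_of_deriv_nonneg (convex_Ici 0) ?_ ?_ ?_
    · exact (Continuous.mul (by continuity) (by continuity)).continuousOn
    · exact fun x _ => (hderiv x).differentiableAt.differentiableWithinAt
    · intro x hx
      rw [(hderiv x).deriv]
      positivity
  have h0 : (1:ℝ) ≤ (1+u) * Real.exp (u^2/2 - u) := by
    have := hmono (Set.self_mem_Ici) (Set.mem_Ici.mpr hu) hu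
    simpa using this
  have hepos : 0 < Real.exp (u^2/2 - u) := Real.exp_pos _
  have := mul_le_mul_of_nonneg_right h0 (Real.exp_pos (u - u^2/2)).le
  rw [one_mul, mul_assoc, ← Real.exp_add] at this
  calc Real.exp (u - u^2/2) ≤ (1 + u) * Real.exp (u ^ 2 / 2 - u + (u - u ^ 2 / 2)) := this
    _ = 1 + u := by norm_num

lemma gauss_integral_bound (s m : ℝ) (hs : 0 < s) :
    ∫ x, rexp (-s * (x + m)^2) ∂(gaussianReal 0 1) ≤ rexp (s^2 - s) := by
  have ha : (0:ℝ) < s + 1/2 := by linarith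
  have hmeas : gaussianReal 0 1
      = volume.withDensity (fun x => ((gaussianPDFReal 0 1 x).toNNReal : ℝ≥0∞)) := by
    rw [gaussianReal_of_var_ne_zero _ one_ne_zero]; rfl
  have h1 : ∫ x, rexp (-s * (x + m)^2) ∂(gaussianReal 0 1)
      = ∫ x, gaussianPDFReal 0 1 x * rexp (-s * (x + m)^2) := by
    rw [hmeas, integral_withDensity_eq_integral_smul
      ((measurable_gaussianPDFReal 0 1).real_toNNReal)]
    congr 1; ext x
    simp [NNReal.smul_def, Real.coe_toNNReal _ (gaussianPDFReal_nonneg 0 1 x)]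
  have hpt : ∀ x : ℝ, gaussianPDFReal 0 1 x * rexp (-s * (x + m)^2)
      = (√(2*π))⁻¹ * rexp (-(s*m^2)/(2*(s+1/2)))
        * rexp (-(s+1/2)*(x + s*m/(s+1/2))^2) := by
    intro x
    have hexp : -(x-0)^2/(2*((1:ℝ≥0):ℝ)) + (-s*(x+m)^2)
        = -(s*m^2)/(2*(s+1/2)) + (-(s+1/2)*(x + s*m/(s+1/2))^2) := by
      push_cast
      field_simp
      ring
    rw [gaussianPDFReal]
    rw [mul_assoc, ← Real.exp_add, hexp, Real.exp_add, ← mul_assoc]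
    norm_num
  rw [h1]
  simp_rw [hpt]
  rw [integral_const_mul]
  have hshift : ∫ x : ℝ, rexp (-(s+1/2)*(x + s*m/(s+1/2))^2)
      = ∫ x : ℝ, rexp (-(s+1/2)*x^2) :=
    integral_add_right_eq_self (μ := volume) (fun y : ℝ => rexp (-(s+1/2)*y^2)) (s*m/(s+1/2))
  rw [hshift, integral_gaussian]
  have hsqrt : (√(2*π))⁻¹ * √(π/(s+1/2)) = √(1/(2*(s+1/2))) := by
    rw [← Real.sqrt_inv, ← Real.sqrt_mul (by positivity)]
    congr 1
    field_simp
  have hr : rexp (-(s*m^2)/(2*(s+1/2))) ≤ 1 := by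
    rw [Real.exp_le_one_iff]
    have : 0 ≤ s*m^2 := by positivity
    have h2 : 0 < 2*(s+1/2) := by linarith
    exact div_nonpos_of_nonpos_of_nonneg (by linarith) h2.le
  have hfinal : √(1/(2*(s+1/2))) ≤ rexp (s^2 - s) := by
    have h2a : 2*(s+1/2) = 1 + 2*s := by ring
    have hle : rexp (2*s - (2*s)^2/2) ≤ 1 + 2*s := aux_exp_le (2*s) (by linarith)
    have h3 : 1/(1+2*s) ≤ rexp (2*s^2 - 2*s) := by
      rw [div_le_iff₀ (by linarith : (0:ℝ) < 1 + 2*s)]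
      have : rexp (2*s^2 - 2*s) * rexp (2*s - (2*s)^2/2) = 1 := by
        rw [← Real.exp_add, show (2*s^2 - 2*s) + (2*s - (2*s)^2/2) = 0 by ring, Real.exp_zero]
      nlinarith [Real.exp_pos (2*s^2 - 2*s), Real.exp_pos (2*s - (2*s)^2/2)]
    calc √(1/(2*(s+1/2))) ≤ √(rexp (2*s^2 - 2*s)) := by
          rw [h2a]; exact Real.sqrt_le_sqrt h3
      _ = rexp (s^2 - s) := by
          rw [show (2*s^2 - 2*s) = (s^2-s) + (s^2-s) by ring, Real.exp_add,
            Real.sqrt_mul_self (Real.exp_pos _).le]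
  calc (√(2*π))⁻¹ * rexp (-(s*m^2)/(2*(s+1/2))) * √(π/(s+1/2))
      = ((√(2*π))⁻¹ * √(π/(s+1/2))) * rexp (-(s*m^2)/(2*(s+1/2))) := by ring
    _ ≤ √(1/(2*(s+1/2))) * 1 := by
        rw [hsqrt]
        exact mul_le_mul_of_nonneg_left hr (Real.sqrt_nonneg _)
    _ ≤ rexp (s^2 - s) := by rw [mul_one]; exact hfinal

lemma integral_pi_gauss_prod (p : ℕ) (f : Fin p → ℝ → ℝ) :
    ∫ x : Fin p → ℝ, ∏ i, f i (x i) ∂(Measure.pi fun _ => gaussianReal 0 1)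
      = ∏ i, ∫ x, f i x ∂(gaussianReal 0 1) := by
  letI : MeasureSpace ℝ := ⟨gaussianReal 0 1⟩
  haveI : SigmaFinite (volume : Measure ℝ) :=
    inferInstanceAs (SigmaFinite (gaussianReal 0 1))
  exact MeasureTheory.integral_fintype_prod_eq_prod f

noncomputable section

/-- Lower deviation bound for the noncentral chi-squared distribution: for `U ~ χ²_p(λ)`
and every `c > 0`, `P(U − p ≤ −c) ≤ exp(−c²/(4p))`. -/
theorem noncentralChiSq_lower_deviation (p : ℕ) (hp : 1 ≤ p) (μ : Fin p → ℝ)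
    (c : ℝ) (hc : 0 < c) :
    noncentralChiSq p μ {u | u - (p : ℝ) ≤ -c} ≤
      ENNReal.ofReal (Real.exp (-c ^ 2 / (4 * p))) := by
  set ν := Measure.pi (fun _ : Fin p => gaussianReal 0 1) with hν
  haveI : IsProbabilityMeasure ν := by rw [hν]; infer_instance
  have hppos : (0:ℝ) < p := by exact_mod_cast hp
  set s : ℝ := c/(2*p) with hs_def
  have hs : 0 < s := by positivity
  set f : (Fin p → ℝ) → ℝ := fun z => ∑ i, (z i + μ i)^2 with hf_def
  have hfmeas : Measurable f :=
    Finset.measurable_sum _ fun i _ => ((measurable_pi_apply i).add_const _).pow_const 2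
  have hset : MeasurableSet {u : ℝ | u - (p:ℝ) ≤ -c} :=
    measurableSet_le (measurable_id.sub_const _) measurable_const
  rw [noncentralChiSq, Measure.map_apply hfmeas hset]
  have hnonneg : ∀ z, 0 ≤ f z := fun z => Finset.sum_nonneg fun i _ => sq_nonneg _
  have hint : Integrable (fun z => rexp ((-s) * f z)) ν := by
    refine Integrable.mono' (integrable_const 1)
      ((hfmeas.const_mul (-s)).exp.aestronglyMeasurable) (ae_of_all _ fun z => ?_)
    rw [Real.norm_eq_abs, abs_of_pos (Real.exp_pos _), Real.exp_le_one_iff]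
    nlinarith [hnonneg z]
  have hmarkov := measure_le_le_exp_mul_mgf (μ := ν) (X := f) (t := -s)
    ((p:ℝ) - c) (neg_nonpos.mpr hs.le) hint
  have hmgf : mgf f ν (-s)
      = ∏ i, ∫ x, rexp (-s * (x + μ i)^2) ∂(gaussianReal 0 1) := by
    rw [mgf]
    have hprod : ∀ z : Fin p → ℝ, rexp ((-s) * f z) = ∏ i, rexp (-s * (z i + μ i)^2) := by
      intro z
      rw [hf_def, Finset.mul_sum, Real.exp_sum]
    simp_rw [hprod]
    exact integral_pi_gauss_prod p (fun i x => rexp (-s * (x + μ i)^2))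
  have hboundprod : mgf f ν (-s) ≤ rexp ((p:ℝ)*(s^2 - s)) := by
    rw [hmgf]
    calc ∏ i, ∫ x, rexp (-s * (x + μ i)^2) ∂(gaussianReal 0 1)
        ≤ ∏ _i : Fin p, rexp (s^2 - s) :=
          Finset.prod_le_prod (fun i _ => integral_nonneg fun x => (Real.exp_pos _).le)
            (fun i _ => gauss_integral_bound s (μ i) hs)
      _ = rexp ((p:ℝ)*(s^2-s)) := by
          rw [Finset.prod_const, ← Real.exp_nat_mul]
          simp
  have hpre : f ⁻¹' {u | u - (p:ℝ) ≤ -c} = {z | f z ≤ (p:ℝ) - c} := by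
    ext z
    simp only [Set.mem_preimage, Set.mem_setOf_eq]
    constructor <;> intro h <;> linarith
  rw [hpre]
  refine (ENNReal.le_ofReal_iff_toReal_le (measure_ne_top _ _) (Real.exp_pos _).le).mpr ?_
  calc (ν {z | f z ≤ (p:ℝ) - c}).toReal
      ≤ rexp (-(-s) * ((p:ℝ) - c)) * mgf f ν (-s) := hmarkov
    _ ≤ rexp (-(-s) * ((p:ℝ) - c)) * rexp ((p:ℝ)*(s^2 - s)) :=
        mul_le_mul_of_nonneg_left hboundprod (Real.exp_pos _).le
    _ = rexp (-c^2/(4*p)) := by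
        rw [← Real.exp_add]
        congr 1
        rw [hs_def]
        field_simp
        ring
end
end
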